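/- arXiv:0904.1678 — 2 statements merged into one kernel-verified Lean document; each statement's English description precedes it below -/
import Mathlib

section
/- Let F be an endofunctor on a cocomplete category preserving colimits of λ-indexed chains for an infinite limit ordinal λ. Then the free-algebra construction stops after λ steps: the connecting natural transformation w_{λ, λ+1} : F_λ → F_{λ+1} = F F_λ + Id is a natural isomorphism. -/
open CategoryTheory CategoryTheory.Limits

universe v u

/-- The free-algebra (term functor) construction for an endofunctor `F` on a cocomplete
category: term functors `Fo n` for each ordinal `n`, connecting natural transformations
`w`, coproduct injections `q n : F ∘ Fₙ ⟶ F_{n+1}` and `ι n : Id ⟶ Fₙ`, where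
`F₀ = Id` (up to iso, witnessed by `ι 0` being invertible), `F_{n+1} = F Fₙ + Id`
(witnessed by the binary-coproduct universal property), and `Fₗ = colim_{m<l} F_m` at
limit ordinals (witnessed by the hand-rolled colimit universal property). -/
structure TermConstruction {C : Type u} [Category.{v} C] (F : C ⥤ C) where
  Fo : Ordinal.{v} → C ⥤ C
  w : ∀ {m n : Ordinal.{v}}, m ≤ n → (Fo m ⟶ Fo n)
  q : ∀ n : Ordinal.{v}, Fo n ⋙ F ⟶ Fo (n + 1)
  ι : ∀ n : Ordinal.{v}, 𝟭 C ⟶ Fo n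
  iso0 : IsIso (ι 0)
  w_refl : ∀ n : Ordinal.{v}, w (le_refl n) = 𝟙 (Fo n)
  w_trans : ∀ {m n p : Ordinal.{v}} (h₁ : m ≤ n) (h₂ : n ≤ p), w h₁ ≫ w h₂ = w (h₁.trans h₂)
  ι_w : ∀ {m n : Ordinal.{v}} (h : m ≤ n), ι m ≫ w h = ι n
  q_w : ∀ {m n : Ordinal.{v}} (h : m ≤ n),
      Functor.whiskerRight (w h) F ≫ q n = q m ≫ w (add_le_add_left h 1)
  succ_isColimit : ∀ (n : Ordinal.{v}) (A : C),
      Nonempty (IsColimit (BinaryCofan.mk ((q n).app A) ((ι (n + 1)).app A)))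
  limit_exists_unique : ∀ (n : Ordinal.{v}), Order.IsSuccLimit n → ∀ (A X : C)
      (g : ∀ m : Ordinal.{v}, m < n → ((Fo m).obj A ⟶ X)),
      (∀ (m m' : Ordinal.{v}) (h : m ≤ m') (h' : m' < n),
        (w h).app A ≫ g m' h' = g m (lt_of_le_of_lt h h')) →
      ∃! k : (Fo n).obj A ⟶ X,
        ∀ (m : Ordinal.{v}) (h : m < n), (w h.le).app A ≫ k = g m h

/-- The term-evaluations `ε n : Fₙ A ⟶ A` of an `F`-algebra `(A, α)`, defined recursively by
`ε 0 = id` (transported along `ι 0`), `ε (n+1) = [α ∘ F (ε n), id]` and colimits at limit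
ordinals. -/
structure TermEval {C : Type u} [Category.{v} C] (F : C ⥤ C) (T : TermConstruction F)
    (A : C) (α : F.obj A ⟶ A) where
  ε : ∀ n : Ordinal.{v}, (T.Fo n).obj A ⟶ A
  ε_zero : (T.ι 0).app A ≫ ε 0 = 𝟙 A
  ε_succ_q : ∀ n : Ordinal.{v}, (T.q n).app A ≫ ε (n + 1) = F.map (ε n) ≫ α
  ε_succ_ι : ∀ n : Ordinal.{v}, (T.ι (n + 1)).app A ≫ ε (n + 1) = 𝟙 A
  ε_limit : ∀ (n : Ordinal.{v}), Order.IsSuccLimit n →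
      ∀ (m : Ordinal.{v}) (h : m < n), (T.w h.le).app A ≫ ε n = ε m


/-! Since `F` preserves the colimit `F_l A = colim_{m<l} F_m A`, the maps
`q_m ≫ w_{m+1,l} : F F_m A ⟶ F_l A` form a cocone inducing an algebra structure
`β : F F_l A ⟶ F_l A`. Copairing it with `ι_l` gives `[β, ι_l] : F_{l+1} A = F F_l A + A ⟶ F_l A`,
and the universal properties of the colimit and of the coproduct show that it is inverse to
`w_{l,l+1}`. -/

namespace TermConstruction

variable {C : Type u} [Category.{v} C] {F : C ⥤ C} (T : TermConstruction F)

lemma w_app_comp_w_app {m n p : Ordinal.{v}} (h₁ : m ≤ n) (h₂ : n ≤ p) (A : C) :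
    (T.w h₁).app A ≫ (T.w h₂).app A = (T.w (h₁.trans h₂)).app A := by
  rw [← NatTrans.comp_app, T.w_trans]

lemma ι_app_comp_w_app {m n : Ordinal.{v}} (h : m ≤ n) (A : C) :
    (T.ι m).app A ≫ (T.w h).app A = (T.ι n).app A := by
  rw [← NatTrans.comp_app, T.ι_w]

lemma map_w_app_comp_q_app {m n : Ordinal.{v}} (h : m ≤ n) (A : C) :
    F.map ((T.w h).app A) ≫ (T.q n).app A =
      (T.q m).app A ≫ (T.w (add_le_add_left h 1)).app A :=
  congrArg (NatTrans.app · A) (T.q_w h)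

def chain (l : Ordinal.{v}) (A : C) : {m : Ordinal.{v} // m < l} ⥤ C where
  obj m := (T.Fo m.1).obj A
  map h := (T.w (leOfHom h)).app A
  map_id m := congrArg (NatTrans.app · A) (T.w_refl m.1)
  map_comp _ _ := (T.w_app_comp_w_app _ _ A).symm

def chainCocone (l : Ordinal.{v}) (A : C) : Cocone (T.chain l A) where
  pt := (T.Fo l).obj A
  ι.app m := (T.w m.2.le).app A
  ι.naturality _ _ _ := by
    dsimp [chain]
    rw [Category.comp_id, w_app_comp_w_app]

def succCocone (l : Ordinal.{v}) (A : C) : Cocone (T.chain l A ⋙ F) where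
  pt := (T.Fo l).obj A
  ι.app m := (T.q m.1).app A ≫ (T.w (Order.add_one_le_of_lt m.2)).app A
  ι.naturality _ _ h := by
    dsimp [chain]
    rw [Category.comp_id, reassoc_of% (T.map_w_app_comp_q_app (leOfHom h) A), w_app_comp_w_app]

variable {l : Ordinal.{v}}

noncomputable def isColimitChainCocone (hl : Order.IsSuccLimit l) (A : C) :
    IsColimit (T.chainCocone l A) :=
  have spec (s : Cocone (T.chain l A)) := T.limit_exists_unique l hl A s.pt
    (fun m h => s.ι.app ⟨m, h⟩) fun _ _ h h' => s.w (homOfLE (Subtype.mk_le_mk.mpr h) :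
      (⟨_, h.trans_lt h'⟩ : {m // m < l}) ⟶ ⟨_, h'⟩)
  { desc s := (spec s).choose
    fac s m := (spec s).choose_spec.1 m.1 m.2
    uniq s f hf := (spec s).choose_spec.2 f fun m h => hf ⟨m, h⟩ }

variable [PreservesColimitsOfShape {m : Ordinal.{v} // m < l} F]

noncomputable def limitStr (hl : Order.IsSuccLimit l) (A : C) :
    F.obj ((T.Fo l).obj A) ⟶ (T.Fo l).obj A :=
  (isColimitOfPreserves F (T.isColimitChainCocone hl A)).desc (T.succCocone l A)

lemma map_w_app_comp_limitStr (hl : Order.IsSuccLimit l) (A : C) {m : Ordinal.{v}} (h : m < l) :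
    F.map ((T.w h.le).app A) ≫ T.limitStr hl A =
      (T.q m).app A ≫ (T.w (Order.add_one_le_of_lt h)).app A :=
  (isColimitOfPreserves F (T.isColimitChainCocone hl A)).fac (T.succCocone l A) ⟨m, h⟩

noncomputable def wSuccInv (hl : Order.IsSuccLimit l) (A : C) :
    (T.Fo (l + 1)).obj A ⟶ (T.Fo l).obj A :=
  BinaryCofan.IsColimit.desc (T.succ_isColimit l A).some (T.limitStr hl A) ((T.ι l).app A)

lemma q_app_comp_wSuccInv (hl : Order.IsSuccLimit l) (A : C) :
    (T.q l).app A ≫ T.wSuccInv hl A = T.limitStr hl A :=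
  BinaryCofan.IsColimit.inl_desc (T.succ_isColimit l A).some _ _

lemma ι_app_comp_wSuccInv (hl : Order.IsSuccLimit l) (A : C) :
    (T.ι (l + 1)).app A ≫ T.wSuccInv hl A = (T.ι l).app A :=
  BinaryCofan.IsColimit.inr_desc (T.succ_isColimit l A).some _ _

lemma w_app_comp_wSuccInv_of_lt (hl : Order.IsSuccLimit l) (A : C) {m : Ordinal.{v}}
    (h : m < l) :
    (T.w (add_le_add_left h.le 1)).app A ≫ T.wSuccInv hl A =
      (T.w (Order.add_one_le_of_lt h)).app A := by
  refine BinaryCofan.IsColimit.hom_ext (T.succ_isColimit m A).some ?_ ?_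
  · change (T.q m).app A ≫ _ = (T.q m).app A ≫ _
    rw [← reassoc_of% (T.map_w_app_comp_q_app h.le A), q_app_comp_wSuccInv,
      T.map_w_app_comp_limitStr hl A h]
  · change (T.ι (m + 1)).app A ≫ _ = (T.ι (m + 1)).app A ≫ _
    rw [reassoc_of% (T.ι_app_comp_w_app _ A), ι_app_comp_wSuccInv, ι_app_comp_w_app]

lemma w_app_comp_wSuccInv (hl : Order.IsSuccLimit l) (A : C) :
    (T.w le_self_add).app A ≫ T.wSuccInv hl A = 𝟙 _ := by
  refine (T.isColimitChainCocone hl A).hom_ext fun ⟨m, h⟩ => ?_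
  change (T.w h.le).app A ≫ _ = (T.w h.le).app A ≫ _
  rw [reassoc_of% (T.w_app_comp_w_app h.le le_self_add A),
    ← T.w_app_comp_w_app (le_self_add : m ≤ m + 1) (add_le_add_left h.le 1), Category.assoc,
    T.w_app_comp_wSuccInv_of_lt hl A h, w_app_comp_w_app, Category.comp_id]

lemma wSuccInv_comp_w_app (hl : Order.IsSuccLimit l) (A : C) :
    T.wSuccInv hl A ≫ (T.w le_self_add).app A = 𝟙 _ := by
  refine BinaryCofan.IsColimit.hom_ext (T.succ_isColimit l A).some ?_ ?_
  · change (T.q l).app A ≫ _ = (T.q l).app A ≫ _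
    rw [reassoc_of% (T.q_app_comp_wSuccInv hl A), Category.comp_id]
    refine (isColimitOfPreserves F (T.isColimitChainCocone hl A)).hom_ext fun ⟨m, h⟩ => ?_
    change F.map ((T.w h.le).app A) ≫ _ = F.map ((T.w h.le).app A) ≫ _
    rw [reassoc_of% (T.map_w_app_comp_limitStr hl A h), w_app_comp_w_app, map_w_app_comp_q_app]
  · change (T.ι (l + 1)).app A ≫ _ = (T.ι (l + 1)).app A ≫ _
    rw [reassoc_of% (T.ι_app_comp_wSuccInv hl A), ι_app_comp_w_app, Category.comp_id]

lemma isIso_w_app (hl : Order.IsSuccLimit l) (A : C) :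
    IsIso ((T.w (le_self_add : l ≤ l + 1)).app A) :=
  ⟨T.wSuccInv hl A, T.w_app_comp_wSuccInv hl A, T.wSuccInv_comp_w_app hl A⟩

end TermConstruction

theorem construction_stops_general {C : Type u} [Category.{v} C] (F : C ⥤ C)
    (T : TermConstruction F) (l : Ordinal.{v}) (hl : Order.IsSuccLimit l)
    [PreservesColimitsOfShape {m : Ordinal.{v} // m < l} F] :
    IsIso (T.w (le_self_add : l ≤ l + 1)) :=
  have := T.isIso_w_app hl
  NatIso.isIso_of_isIso_app _

/-- If `F` preserves colimits of `λ`-indexed chains for an infinite limit ordinal `λ`, then the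
free-algebra construction stops after `λ` steps: the connecting natural transformation
`w_{λ,λ+1} : F_λ ⟶ F_{λ+1} = F F_λ + Id` is a natural isomorphism. -/
theorem construction_stops {C : Type u} [Category.{v} C] [HasColimits C] (F : C ⥤ C)
    (T : TermConstruction F) (l : Ordinal.{v}) (hl : Order.IsSuccLimit l)
    [PreservesColimitsOfShape {m : Ordinal.{v} // m < l} F] :
    IsIso (T.w (le_self_add : l ≤ l + 1)) :=
  construction_stops_general F T l hl
end

section
/- Let ρ : G → F_λ be a natural transformation between endofunctors where F, G preserve colimits of λ-chains. Then the transformation ρ_λ : G_λ → F_λ obtained by the chain construction coincides with the unique monad morphism σ : M(G) → M(F) satisfying σ ∘ y^G_λ = ρ given by the freeness of the monad M(G) on G. -/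
open CategoryTheory CategoryTheory.Limits

universe v u

/-- The chain construction extending a natural transformation `ρ : G ⟶ F_λ` to
transformations `ρ_k : G_k ⟶ F_λ` on the term functors of `G`:  `ρ₁ = [ρ, η]`,
`ρ_{k+1} = [μ ∘ ρ F_λ ∘ G ρ_k, η]` (where `η = ι_λ` is the unit and `μ` the multiplication of
the free monad on `F`), with colimits at limit ordinals. -/
structure ChainExtension {C : Type u} [Category.{v} C] (F G : C ⥤ C)
    (TF : TermConstruction F) (TG : TermConstruction G) (l : Ordinal.{v})
    (μ : TF.Fo l ⋙ TF.Fo l ⟶ TF.Fo l) (ρ : G ⟶ TF.Fo l) where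
  ρo : ∀ k : Ordinal.{v}, TG.Fo k ⟶ TF.Fo l
  ρo_ι : ∀ k : Ordinal.{v}, TG.ι k ≫ ρo k = TF.ι l
  ρo_one : ∀ A : C,
      G.map ((TG.ι 0).app A) ≫ (TG.q 0).app A ≫ (ρo (0 + 1)).app A = ρ.app A
  ρo_succ : ∀ (k : Ordinal.{v}) (A : C),
      (TG.q k).app A ≫ (ρo (k + 1)).app A =
        G.map ((ρo k).app A) ≫ ρ.app ((TF.Fo l).obj A) ≫ μ.app A
  ρo_limit : ∀ (k : Ordinal.{v}), Order.IsSuccLimit k → ∀ (j : Ordinal.{v}) (h : j < k),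
      TG.w h.le ≫ ρo k = ρo j

/-!
A map `σ : G_λ ⟶ F_λ` preserving units and multiplications must intertwine the `G`-algebra
structure `υ` of `G_λ` with `μ ∘ ρ F_λ`, because `υ` is the multiplication of `G_λ` restricted along
the universal arrow `y`. Then `σ` and `ρ_λ` satisfy the same recursion along the chain `G_k`
(agreement on the unit, on the `G`-summand at successors, and colimits at limits), so
`w_{k,λ} ≫ σ = ρ_k` for all `k ≤ λ` by transfinite induction.
-/

open CategoryTheory CategoryTheory.Limits

namespace TermConstruction

variable {C : Type u} [Category.{v} C] {F : C ⥤ C} (T : TermConstruction F) {H : C ⥤ C}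

theorem hom_ext_zero {f g : T.Fo 0 ⟶ H} (h : T.ι 0 ≫ f = T.ι 0 ≫ g) : f = g := by
  have := T.iso0
  exact (cancel_epi _).1 h

theorem hom_ext_succ (n : Ordinal.{v}) {f g : T.Fo (n + 1) ⟶ H}
    (hq : T.q n ≫ f = T.q n ≫ g) (hι : T.ι (n + 1) ≫ f = T.ι (n + 1) ≫ g) : f = g := by
  ext A
  obtain ⟨hc⟩ := T.succ_isColimit n A
  exact BinaryCofan.IsColimit.hom_ext hc (congr_app hq A) (congr_app hι A)

theorem hom_ext_of_isSuccLimit {n : Ordinal.{v}} (hn : Order.IsSuccLimit n)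
    {f g : T.Fo n ⟶ H} (h : ∀ m (hm : m < n), T.w hm.le ≫ f = T.w hm.le ≫ g) : f = g := by
  ext A
  have compat : ∀ m m' (hmm' : m ≤ m') (hm' : m' < n),
      (T.w hmm').app A ≫ (T.w hm'.le ≫ f).app A = (T.w (hmm'.trans_lt hm').le ≫ f).app A := by
    intro m m' hmm' hm'
    rw [← NatTrans.comp_app, ← Category.assoc, T.w_trans]
  obtain ⟨k, -, hk⟩ := T.limit_exists_unique n hn A (H.obj A) _ compat
  have hf := hk (f.app A) fun m hm => by simp
  have hg := hk (g.app A) fun m hm => by rw [h m hm]; simp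
  rw [hf, hg]

end TermConstruction

theorem TermEval.universalArrow_comp_ε {C : Type u} [Category.{v} C] {G : C ⥤ C}
    {T : TermConstruction G} {X : C} {α : G.obj X ⟶ X} (E : TermEval G T X α)
    {l : Ordinal.{v}} (hl : Order.IsSuccLimit l) (h1 : (0 : Ordinal.{v}) + 1 ≤ l) :
    G.map ((T.ι 0).app X) ≫ (T.q 0).app X ≫ (T.w h1).app X ≫ E.ε l = α := by
  have h01 : (0 : Ordinal.{v}) + 1 < l := by
    rw [← Order.succ_eq_add_one]
    exact hl.succ_lt hl.bot_lt
  rw [E.ε_limit l hl _ h01, E.ε_succ_q, ← G.map_comp_assoc, E.ε_zero]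
  simp

theorem structureMap_comp_eq_of_mul_comp {C : Type u} [Category.{v} C] {G M N : C ⥤ C}
    (y : G ⟶ M) (υ : M ⋙ G ⟶ M) (μM : M ⋙ M ⟶ M) (μN : N ⋙ N ⟶ N) (σ : M ⟶ N) (ρ : G ⟶ N)
    (hy : ∀ A, y.app (M.obj A) ≫ μM.app A = υ.app A)
    (σ_mul : ∀ A, μM.app A ≫ σ.app A = σ.app (M.obj A) ≫ N.map (σ.app A) ≫ μN.app A)
    (σ_y : y ≫ σ = ρ) (A : C) :
    υ.app A ≫ σ.app A = G.map (σ.app A) ≫ ρ.app (N.obj A) ≫ μN.app A := by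
  rw [← hy, Category.assoc, σ_mul, ← Category.assoc, ← NatTrans.comp_app, σ_y,
    ← ρ.naturality_assoc]

theorem ChainExtension.w_comp_eq_ρo {C : Type u} [Category.{v} C] {F G : C ⥤ C}
    {TF : TermConstruction F} {TG : TermConstruction G} {l : Ordinal.{v}}
    {μ : TF.Fo l ⋙ TF.Fo l ⟶ TF.Fo l} {ρ : G ⟶ TF.Fo l} (R : ChainExtension F G TF TG l μ ρ)
    (υ : TG.Fo l ⋙ G ⟶ TG.Fo l)
    (hυ : ∀ (n : Ordinal.{v}) (hn : n < l) (hn1 : n + 1 ≤ l) (A : C),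
      G.map ((TG.w hn.le).app A) ≫ υ.app A = (TG.q n).app A ≫ (TG.w hn1).app A)
    (σ : TG.Fo l ⟶ TF.Fo l) (σ_unit : TG.ι l ≫ σ = TF.ι l)
    (σ_υ : ∀ A, υ.app A ≫ σ.app A = G.map (σ.app A) ≫ ρ.app ((TF.Fo l).obj A) ≫ μ.app A)
    (k : Ordinal.{v}) (hk : k ≤ l) : TG.w hk ≫ σ = R.ρo k := by
  have unit_eq : ∀ j (hj : j ≤ l), TG.ι j ≫ TG.w hj ≫ σ = TG.ι j ≫ R.ρo j := fun j hj => by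
    rw [← Category.assoc, TG.ι_w, R.ρo_ι, σ_unit]
  induction k using Ordinal.limitRecOn with
  | zero => exact TG.hom_ext_zero (unit_eq 0 hk)
  | add_one a IH =>
    have ha : a < l := (Order.lt_add_one_iff.2 le_rfl).trans_le hk
    refine TG.hom_ext_succ a ?_ (unit_eq _ hk)
    ext A
    have IHA := congr_app (IH ha.le) A
    simp only [NatTrans.comp_app] at IHA ⊢
    rw [R.ρo_succ, ← Category.assoc, ← hυ a ha hk A, Category.assoc, σ_υ,
      ← G.map_comp_assoc, IHA]
  | limit k hlim IH =>
    refine TG.hom_ext_of_isSuccLimit hlim fun m hm => ?_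
    rw [← Category.assoc, TG.w_trans, IH m hm, R.ρo_limit k hlim m hm]

theorem chainExtension_eq_monad_morphism_general {C : Type u} [Category.{v} C]
    (F G : C ⥤ C) (TF : TermConstruction F) (TG : TermConstruction G)
    (l : Ordinal.{v}) (hl : Order.IsSuccLimit l)
    (EvG : ∀ (A : C) (α : G.obj A ⟶ A), TermEval G TG A α)
    (υG : TG.Fo l ⋙ G ⟶ TG.Fo l)
    (hυG : ∀ (n : Ordinal.{v}) (hn : n < l) (hn1 : n + 1 ≤ l) (A : C),
      G.map ((TG.w hn.le).app A) ≫ υG.app A = (TG.q n).app A ≫ (TG.w hn1).app A)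
    (μF : TF.Fo l ⋙ TF.Fo l ⟶ TF.Fo l)
    (μG : TG.Fo l ⋙ TG.Fo l ⟶ TG.Fo l)
    (hμG : ∀ A : C, μG.app A = (EvG ((TG.Fo l).obj A) (υG.app A)).ε l)
    (ρ : G ⟶ TF.Fo l) (R : ChainExtension F G TF TG l μF ρ)
    (yG : G ⟶ TG.Fo l) (h1 : (0 : Ordinal.{v}) + 1 ≤ l)
    (hyG : ∀ A : C, yG.app A = G.map ((TG.ι 0).app A) ≫ (TG.q 0).app A ≫ (TG.w h1).app A)
    (σ : TG.Fo l ⟶ TF.Fo l)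
    (σ_unit : ∀ A : C, (TG.ι l).app A ≫ σ.app A = (TF.ι l).app A)
    (σ_mul : ∀ A : C, μG.app A ≫ σ.app A =
      σ.app ((TG.Fo l).obj A) ≫ (TF.Fo l).map (σ.app A) ≫ μF.app A)
    (σ_y : yG ≫ σ = ρ) :
    σ = R.ρo l := by
  have y_mul : ∀ A, yG.app ((TG.Fo l).obj A) ≫ μG.app A = υG.app A := fun A => by
    rw [hyG, hμG, Category.assoc, Category.assoc]
    exact (EvG _ _).universalArrow_comp_ε hl h1
  have σ_υ := structureMap_comp_eq_of_mul_comp yG υG μG μF σ ρ y_mul σ_mul σ_y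
  have σ_unit' : TG.ι l ≫ σ = TF.ι l := by ext A; exact σ_unit A
  simpa only [TG.w_refl, Category.id_comp] using
    R.w_comp_eq_ρo υG hυG σ σ_unit' σ_υ l le_rfl

/-- The transformation `ρ_λ : G_λ ⟶ F_λ` obtained by the chain construction coincides with the
monad morphism `σ : M(G) ⟶ M(F)` satisfying `σ ∘ y^G_λ = ρ` given by the freeness of the
monad `M(G)`: any monad morphism `σ` between the free monads `(G_λ, ι^G_λ, μ^G)` and
`(F_λ, ι^F_λ, μ^F)` (multiplications given by term-evaluation on the free algebras) with
`σ ∘ y^G_λ = ρ` equals `ρ_λ`. -/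
theorem chainExtension_eq_monad_morphism {C : Type u} [Category.{v} C] [HasColimits C]
    (F G : C ⥤ C) (TF : TermConstruction F) (TG : TermConstruction G)
    (l : Ordinal.{v}) (hl : Order.IsSuccLimit l)
    [PreservesColimitsOfShape {m : Ordinal.{v} // m < l} F]
    [PreservesColimitsOfShape {m : Ordinal.{v} // m < l} G]
    (EvF : ∀ (A : C) (α : F.obj A ⟶ A), TermEval F TF A α)
    (EvG : ∀ (A : C) (α : G.obj A ⟶ A), TermEval G TG A α)
    (υF : TF.Fo l ⋙ F ⟶ TF.Fo l)
    (hυF : ∀ (n : Ordinal.{v}) (hn : n < l) (hn1 : n + 1 ≤ l) (A : C),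
      F.map ((TF.w hn.le).app A) ≫ υF.app A = (TF.q n).app A ≫ (TF.w hn1).app A)
    (υG : TG.Fo l ⋙ G ⟶ TG.Fo l)
    (hυG : ∀ (n : Ordinal.{v}) (hn : n < l) (hn1 : n + 1 ≤ l) (A : C),
      G.map ((TG.w hn.le).app A) ≫ υG.app A = (TG.q n).app A ≫ (TG.w hn1).app A)
    (μF : TF.Fo l ⋙ TF.Fo l ⟶ TF.Fo l)
    (hμF : ∀ A : C, μF.app A = (EvF ((TF.Fo l).obj A) (υF.app A)).ε l)
    (μG : TG.Fo l ⋙ TG.Fo l ⟶ TG.Fo l)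
    (hμG : ∀ A : C, μG.app A = (EvG ((TG.Fo l).obj A) (υG.app A)).ε l)
    (ρ : G ⟶ TF.Fo l) (R : ChainExtension F G TF TG l μF ρ)
    (yG : G ⟶ TG.Fo l) (h1 : (0 : Ordinal.{v}) + 1 ≤ l)
    (hyG : ∀ A : C, yG.app A = G.map ((TG.ι 0).app A) ≫ (TG.q 0).app A ≫ (TG.w h1).app A)
    (σ : TG.Fo l ⟶ TF.Fo l)
    (σ_unit : ∀ A : C, (TG.ι l).app A ≫ σ.app A = (TF.ι l).app A)
    (σ_mul : ∀ A : C, μG.app A ≫ σ.app A =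
      σ.app ((TG.Fo l).obj A) ≫ (TF.Fo l).map (σ.app A) ≫ μF.app A)
    (σ_y : yG ≫ σ = ρ) :
    σ = R.ρo l :=
  chainExtension_eq_monad_morphism_general F G TF TG l hl EvG υG hυG μF μG hμG ρ R yG h1 hyG σ
    σ_unit σ_mul σ_y
end
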